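/- Second-order consistency of the Gaussian nonlocal operator for quadratic polynomials: if u(x) = c + bᵀx + ½ xᵀ M x is a quadratic polynomial with symmetric matrix M, then L_δ u(x) = ∫_{ℝ^d} (u(y) − u(x)) γ(x,y) dy = Σ_{i,j} a^{i,j}(x) M_{ij} = tr(A(x) M) exactly, for every δ > 0. -/

import Mathlib

open MeasureTheory Matrix

/-- The `d`-dimensional Gaussian density with mean `0` and covariance matrix `S`. -/
noncomputable def gaussDensity {d : ℕ} (S : Matrix (Fin d) (Fin d) ℝ) (z : Fin d → ℝ) : ℝ :=
  (Real.sqrt ((2 * Real.pi) ^ d * S.det))⁻¹ *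
    Real.exp (-(1 / 2) * (z ⬝ᵥ S⁻¹.mulVec z))

/-- The nonlocal kernel `γ(x,y) = (2/δ²) p(y - x; 0, δ² A(x))`. -/
noncomputable def gaussKernel {d : ℕ} (A : (Fin d → ℝ) → Matrix (Fin d) (Fin d) ℝ)
    (δ : ℝ) (x y : Fin d → ℝ) : ℝ :=
  (2 / δ ^ 2) * gaussDensity (δ ^ 2 • A x) (y - x)

/-!
Substituting `y = x + z`, the increment of a quadratic polynomial is
`u (x + z) - u x = ℓ ⬝ z + ½ zᵀ M z` for some vector `ℓ`, so `L_δ u(x) = (2/δ²) 𝔼[ℓ ⬝ Z + ½ Zᵀ M Z]`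
with `Z ~ N(0, S)`, `S = δ² A(x)`. Factor `S = L Lᵀ`: the change of variables `z = L w` turns the
density of `Z` into the standard Gaussian density on `ℝᵈ`, a product of one-dimensional standard
densities. By Fubini its first moments vanish and its second moments are `δᵢⱼ`, hence
`𝔼[ℓ ⬝ Z] = 0` and `𝔼[Zᵀ M Z] = tr (Lᵀ M L) = tr (M S)`, and
`(2/δ²) · ½ · tr (M δ² A(x)) = tr (A(x) M)`.
-/

open ProbabilityTheory
open scoped NNReal

section GaussianReal

lemma integrable_gaussianPDFReal_smul_iff {E : Type*} [NormedAddCommGroup E] [NormedSpace ℝ E]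
    {μ : ℝ} {v : ℝ≥0} (hv : v ≠ 0) {f : ℝ → E} :
    Integrable (fun x ↦ gaussianPDFReal μ v x • f x) ↔ Integrable f (gaussianReal μ v) := by
  rw [gaussianReal_of_var_ne_zero μ hv, integrable_withDensity_iff_integrable_smul'
    (measurable_gaussianPDF μ v) (ae_of_all _ fun _ ↦ gaussianPDF_lt_top)]
  simp [gaussianPDF, ENNReal.toReal_ofReal (gaussianPDFReal_nonneg μ v _)]

lemma integrable_id_mul_gaussianPDFReal : Integrable fun x ↦ x * gaussianPDFReal 0 1 x := by
  simp_rw [mul_comm _ (gaussianPDFReal 0 1 _)]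
  exact (integrable_gaussianPDFReal_smul_iff one_ne_zero).2
    ((memLp_id_gaussianReal 1).integrable le_rfl)

lemma integrable_sq_mul_gaussianPDFReal : Integrable fun x ↦ x ^ 2 * gaussianPDFReal 0 1 x := by
  simp_rw [mul_comm _ (gaussianPDFReal 0 1 _)]
  exact (integrable_gaussianPDFReal_smul_iff one_ne_zero).2
    (memLp_id_gaussianReal 2).integrable_sq

lemma integral_id_mul_gaussianPDFReal : ∫ x, x * gaussianPDFReal 0 1 x = 0 := by
  simpa [integral_gaussianReal_eq_integral_smul, mul_comm] using
    integral_id_gaussianReal (μ := 0) (v := 1)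

lemma integral_sq_mul_gaussianPDFReal : ∫ x, x ^ 2 * gaussianPDFReal 0 1 x = 1 := by
  have h := variance_of_integral_eq_zero (μ := gaussianReal 0 1) measurable_id.aemeasurable
    integral_id_gaussianReal
  rw [variance_id_gaussianReal, integral_gaussianReal_eq_integral_smul one_ne_zero] at h
  simp_rw [mul_comm _ (gaussianPDFReal 0 1 _)]
  exact_mod_cast h.symm

end GaussianReal

section StdGaussianPDF

variable {ι : Type*} [Fintype ι]

noncomputable def stdGaussianPDF (w : ι → ℝ) : ℝ := ∏ i, gaussianPDFReal 0 1 (w i)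

lemma stdGaussianPDF_eq (w : ι → ℝ) :
    stdGaussianPDF w =
      (Real.sqrt (2 * Real.pi))⁻¹ ^ Fintype.card ι * Real.exp (-(1 / 2) * (w ⬝ᵥ w)) := by
  simp [stdGaussianPDF, gaussianPDFReal, Finset.prod_mul_distrib, ← Real.exp_sum, dotProduct,
    Finset.mul_sum, div_eq_inv_mul, pow_two, mul_comm]

lemma integral_prod_mul_stdGaussianPDF (f : ι → ℝ → ℝ) :
    ∫ w, (∏ i, f i (w i)) * stdGaussianPDF w = ∏ i, ∫ t, f i t * gaussianPDFReal 0 1 t := by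
  simp_rw [stdGaussianPDF, ← Finset.prod_mul_distrib]
  exact integral_fintype_prod_volume_eq_prod fun i t ↦ f i t * gaussianPDFReal 0 1 t

lemma integrable_prod_mul_stdGaussianPDF {f : ι → ℝ → ℝ}
    (hf : ∀ i, Integrable fun t ↦ f i t * gaussianPDFReal 0 1 t) :
    Integrable fun w : ι → ℝ ↦ (∏ i, f i (w i)) * stdGaussianPDF w := by
  simp_rw [stdGaussianPDF, ← Finset.prod_mul_distrib]
  exact Integrable.fintype_prod hf

lemma dotProduct_mulVec_mul_eq_sum (B : Matrix ι ι ℝ) (w : ι → ℝ) (p : ℝ) :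
    (w ⬝ᵥ B *ᵥ w) * p = ∑ i, ∑ j, B i j * (w i * w j * p) := by
  simp only [dotProduct, mulVec, Finset.sum_mul, Finset.mul_sum]
  exact Finset.sum_congr rfl fun i _ ↦ Finset.sum_congr rfl fun j _ ↦ by ring

variable [DecidableEq ι]

lemma integrable_eval_mul_stdGaussianPDF (i : ι) :
    Integrable fun w : ι → ℝ ↦ w i * stdGaussianPDF w := by
  have h := integrable_prod_mul_stdGaussianPDF (f := fun k t ↦ if k = i then t else 1) fun k ↦ by
    split_ifs
    · exact integrable_id_mul_gaussianPDFReal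
    · simpa using integrable_gaussianPDFReal 0 1
  simpa using h

lemma integral_eval_mul_stdGaussianPDF (i : ι) : ∫ w, w i * stdGaussianPDF w = 0 := by
  have h := integral_prod_mul_stdGaussianPDF fun k t ↦ if k = i then t else 1
  simp only [Finset.prod_ite_eq', Finset.mem_univ, if_true] at h
  rw [h]
  exact Finset.prod_eq_zero (Finset.mem_univ i) (by simpa using integral_id_mul_gaussianPDFReal)

lemma integrable_eval_mul_eval_mul_stdGaussianPDF (i j : ι) :
    Integrable fun w : ι → ℝ ↦ w i * w j * stdGaussianPDF w := by
  have h := integrable_prod_mul_stdGaussianPDF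
    (f := fun k t ↦ (if k = i then t else 1) * (if k = j then t else 1)) fun k ↦ by
      split_ifs
      · simpa [sq] using integrable_sq_mul_gaussianPDFReal
      · simpa using integrable_id_mul_gaussianPDFReal
      · simpa using integrable_id_mul_gaussianPDFReal
      · simpa using integrable_gaussianPDFReal 0 1
  simp only [Finset.prod_mul_distrib, Finset.prod_ite_eq', Finset.mem_univ, if_true] at h
  exact h

lemma integral_eval_mul_eval_mul_stdGaussianPDF (i j : ι) :
    ∫ w, w i * w j * stdGaussianPDF w = if i = j then 1 else 0 := by
  have h := integral_prod_mul_stdGaussianPDF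
    fun k t ↦ (if k = i then t else 1) * (if k = j then t else 1)
  simp only [Finset.prod_mul_distrib, Finset.prod_ite_eq', Finset.mem_univ, if_true] at h
  rw [h]
  split_ifs with hij
  · subst hij
    refine Finset.prod_eq_one fun k _ ↦ ?_
    split_ifs
    · simpa [sq] using integral_sq_mul_gaussianPDFReal
    · simpa using integral_gaussianPDFReal_eq_one 0 one_ne_zero
  · exact Finset.prod_eq_zero (Finset.mem_univ i)
      (by simpa [hij] using integral_id_mul_gaussianPDFReal)

lemma integrable_dotProduct_mul_stdGaussianPDF (a : ι → ℝ) :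
    Integrable fun w : ι → ℝ ↦ (a ⬝ᵥ w) * stdGaussianPDF w := by
  simp_rw [dotProduct, Finset.sum_mul, mul_assoc]
  exact integrable_finsetSum _ fun i _ ↦ (integrable_eval_mul_stdGaussianPDF i).const_mul (a i)

lemma integral_dotProduct_mul_stdGaussianPDF (a : ι → ℝ) :
    ∫ w, (a ⬝ᵥ w) * stdGaussianPDF w = 0 := by
  simp_rw [dotProduct, Finset.sum_mul, mul_assoc]
  rw [integral_finsetSum _ fun i _ ↦ (integrable_eval_mul_stdGaussianPDF i).const_mul (a i)]
  simp [integral_const_mul, integral_eval_mul_stdGaussianPDF]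

lemma integrable_quadForm_mul_stdGaussianPDF (B : Matrix ι ι ℝ) :
    Integrable fun w : ι → ℝ ↦ (w ⬝ᵥ B *ᵥ w) * stdGaussianPDF w := by
  simp_rw [dotProduct_mulVec_mul_eq_sum]
  exact integrable_finsetSum _ fun i _ ↦ integrable_finsetSum _ fun j _ ↦
    (integrable_eval_mul_eval_mul_stdGaussianPDF i j).const_mul (B i j)

lemma integral_quadForm_mul_stdGaussianPDF (B : Matrix ι ι ℝ) :
    ∫ w, (w ⬝ᵥ B *ᵥ w) * stdGaussianPDF w = B.trace := by
  simp_rw [dotProduct_mulVec_mul_eq_sum]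
  rw [integral_finsetSum _ fun i _ ↦ integrable_finsetSum _ fun j _ ↦
    (integrable_eval_mul_eval_mul_stdGaussianPDF i j).const_mul (B i j)]
  refine Finset.sum_congr rfl fun i _ ↦ ?_
  rw [integral_finsetSum _ fun j _ ↦ (integrable_eval_mul_eval_mul_stdGaussianPDF i j).const_mul _]
  simp [integral_const_mul, integral_eval_mul_eval_mul_stdGaussianPDF]

end StdGaussianPDF

section LinearChangeOfVariables

variable {ι : Type*} [Fintype ι]

lemma mulVec_dotProduct_mulVec_mulVec (L N : Matrix ι ι ℝ) (w : ι → ℝ) :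
    (L *ᵥ w) ⬝ᵥ N *ᵥ (L *ᵥ w) = w ⬝ᵥ (Lᵀ * N * L) *ᵥ w := by
  conv_rhs => rw [← mulVec_mulVec, dotProduct_mulVec, ← vecMul_vecMul, vecMul_transpose]
  exact dotProduct_mulVec _ _ _

variable [DecidableEq ι]

open scoped MatrixOrder in
lemma Matrix.PosSemidef.exists_mul_transpose_eq {S : Matrix ι ι ℝ} (hS : S.PosSemidef) :
    ∃ L : Matrix ι ι ℝ, L * Lᵀ = S := by
  obtain ⟨B, hB⟩ := CStarAlgebra.nonneg_iff_eq_star_mul_self.mp hS.nonneg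
  -- over `ℝ`, `star B = Bᵀ`
  exact ⟨Bᵀ, by rw [hB, transpose_transpose]; rfl⟩

lemma transpose_mul_inv_mul_eq_one {L : Matrix ι ι ℝ} (hL : L.det ≠ 0) :
    Lᵀ * (L * Lᵀ)⁻¹ * L = 1 := by
  have hLt : IsUnit Lᵀ.det := by simpa using hL.isUnit
  rw [Matrix.mul_inv_rev, mul_assoc, mul_assoc, Matrix.nonsing_inv_mul _ hL.isUnit, mul_one,
    Matrix.mul_nonsing_inv _ hLt]

lemma integral_comp_mulVec {E : Type*} [NormedAddCommGroup E] [NormedSpace ℝ E]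
    {L : Matrix ι ι ℝ} (hL : L.det ≠ 0) (g : (ι → ℝ) → E) :
    ∫ w, g (L *ᵥ w) = |L.det|⁻¹ • ∫ z, g z := by
  let e : (ι → ℝ) ≃ᵐ (ι → ℝ) := (L.toLinearEquiv' (invertibleOfIsUnitDet L hL.isUnit))
    |>.toContinuousLinearEquiv.toHomeomorph.toMeasurableEquiv
  have hmap : volume.map e = ENNReal.ofReal |L.det⁻¹| • volume :=
    Real.map_matrix_volume_pi_eq_smul_volume_pi hL
  calc ∫ w, g (L *ᵥ w) = ∫ w, g (e w) := rfl
    _ = |L.det|⁻¹ • ∫ z, g z := by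
      rw [← integral_map_equiv e g, hmap, integral_smul_measure,
        ENNReal.toReal_ofReal (abs_nonneg _), abs_inv]

end LinearChangeOfVariables

section GaussDensity

variable {d : ℕ}

lemma abs_det_mul_gaussDensity_mulVec {L : Matrix (Fin d) (Fin d) ℝ} (hL : L.det ≠ 0)
    (w : Fin d → ℝ) : |L.det| * gaussDensity (L * Lᵀ) (L *ᵥ w) = stdGaussianPDF w := by
  have hsqrt : Real.sqrt ((2 * Real.pi) ^ d * (L * Lᵀ).det)
      = Real.sqrt (2 * Real.pi) ^ d * |L.det| := by
    rw [det_mul, det_transpose, Real.sqrt_mul (by positivity), Real.sqrt_mul_self_eq_abs,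
      ← Real.sqrt_sq (pow_nonneg (Real.sqrt_nonneg _) d), ← pow_mul, mul_comm d, pow_mul,
      Real.sq_sqrt Real.two_pi_pos.le, mul_comm]
  rw [gaussDensity, mulVec_dotProduct_mulVec_mulVec, transpose_mul_inv_mul_eq_one hL,
    one_mulVec, hsqrt, stdGaussianPDF_eq, Fintype.card_fin, mul_inv, inv_pow]
  field_simp

lemma integral_mul_gaussDensity_eq {L : Matrix (Fin d) (Fin d) ℝ} (hL : L.det ≠ 0)
    (g : (Fin d → ℝ) → ℝ) :
    ∫ z, g z * gaussDensity (L * Lᵀ) z = ∫ w, g (L *ᵥ w) * stdGaussianPDF w := by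
  have habs : |L.det| ≠ 0 := abs_ne_zero.2 hL
  simp_rw [← abs_det_mul_gaussDensity_mulVec hL, mul_left_comm _ |L.det|]
  rw [integral_const_mul, integral_comp_mulVec hL fun z ↦ g z * gaussDensity (L * Lᵀ) z,
    smul_eq_mul, mul_inv_cancel_left₀ habs]

lemma integral_dotProduct_add_quadForm_mul_gaussDensity {S : Matrix (Fin d) (Fin d) ℝ}
    (hS : S.PosDef) (v : Fin d → ℝ) (N : Matrix (Fin d) (Fin d) ℝ) :
    ∫ z, (v ⬝ᵥ z + 1 / 2 * (z ⬝ᵥ N *ᵥ z)) * gaussDensity S z = 1 / 2 * (N * S).trace := by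
  obtain ⟨L, rfl⟩ := hS.posSemidef.exists_mul_transpose_eq
  have hL : L.det ≠ 0 := fun h ↦ by simpa [h] using hS.det_pos
  simp_rw [integral_mul_gaussDensity_eq hL, dotProduct_mulVec v L, mulVec_dotProduct_mulVec_mulVec,
    add_mul, mul_assoc]
  rw [integral_add (integrable_dotProduct_mul_stdGaussianPDF _)
      ((integrable_quadForm_mul_stdGaussianPDF _).const_mul _),
    integral_const_mul, integral_dotProduct_mul_stdGaussianPDF,
    integral_quadForm_mul_stdGaussianPDF, zero_add, trace_mul_comm Lᵀ, mul_assoc N]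

end GaussDensity

section QuadraticPoly

variable {ι : Type*} [Fintype ι]

noncomputable def quadraticPoly (c : ℝ) (b : ι → ℝ) (M : Matrix ι ι ℝ) (y : ι → ℝ) : ℝ :=
  c + b ⬝ᵥ y + 1 / 2 * (y ⬝ᵥ M *ᵥ y)

lemma quadraticPoly_add_sub (c : ℝ) (b : ι → ℝ) (M : Matrix ι ι ℝ) (x z : ι → ℝ) :
    quadraticPoly c b M (z + x) - quadraticPoly c b M x
      = (b + (1 / 2 : ℝ) • (M *ᵥ x + x ᵥ* M)) ⬝ᵥ z + 1 / 2 * (z ⬝ᵥ M *ᵥ z) := by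
  simp only [quadraticPoly, add_dotProduct, dotProduct_add, mulVec_add, smul_dotProduct,
    smul_eq_mul, ← dotProduct_mulVec x M z, dotProduct_comm (M *ᵥ x) z]
  ring

end QuadraticPoly

theorem gaussian_nonlocal_exact_on_quadratics_general {d : ℕ}
    (A : (Fin d → ℝ) → Matrix (Fin d) (Fin d) ℝ)
    (hA : ∀ x, (A x).PosDef) (δ : ℝ) (hδ : 0 < δ)
    (c : ℝ) (b : Fin d → ℝ) (M : Matrix (Fin d) (Fin d) ℝ)
    (u : (Fin d → ℝ) → ℝ)
    (hu : ∀ y, u y = c + b ⬝ᵥ y + (1 / 2) * (y ⬝ᵥ M.mulVec y))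
    (x : Fin d → ℝ) :
    ∫ y : Fin d → ℝ, (u y - u x) * gaussKernel A δ x y = (A x * M).trace := by
  obtain rfl : u = quadraticPoly c b M := funext hu
  have hS : (δ ^ 2 • A x).PosDef := (hA x).smul (pow_pos hδ 2)
  calc ∫ y, (quadraticPoly c b M y - quadraticPoly c b M x) * gaussKernel A δ x y
      = ∫ z, (quadraticPoly c b M (z + x) - quadraticPoly c b M x) * gaussKernel A δ x (z + x) :=
        (integral_add_right_eq_self _ x).symm
    _ = 2 / δ ^ 2 * ∫ z, ((b + (1 / 2 : ℝ) • (M *ᵥ x + x ᵥ* M)) ⬝ᵥ z + 1 / 2 * (z ⬝ᵥ M *ᵥ z))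
          * gaussDensity (δ ^ 2 • A x) z := by
        rw [← integral_const_mul]
        congr 1 with z
        rw [quadraticPoly_add_sub, gaussKernel, add_sub_cancel_right]
        ring
    _ = (A x * M).trace := by
        rw [integral_dotProduct_add_quadForm_mul_gaussDensity hS, mul_smul_comm, trace_smul,
          smul_eq_mul, trace_mul_comm M]
        field_simp

/-- Exact consistency on quadratics: for `u(y) = c + bᵀy + ½ yᵀMy` with `M` symmetric,
`L_δ u(x) = ∫ (u(y)−u(x)) γ(x,y) dy = tr(A(x) M)` for every `δ > 0`. -/
theorem gaussian_nonlocal_exact_on_quadratics {d : ℕ}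
    (A : (Fin d → ℝ) → Matrix (Fin d) (Fin d) ℝ)
    (hA : ∀ x, (A x).PosDef) (δ : ℝ) (hδ : 0 < δ)
    (c : ℝ) (b : Fin d → ℝ) (M : Matrix (Fin d) (Fin d) ℝ) (hM : M.IsSymm)
    (u : (Fin d → ℝ) → ℝ)
    (hu : ∀ y, u y = c + b ⬝ᵥ y + (1 / 2) * (y ⬝ᵥ M.mulVec y))
    (x : Fin d → ℝ) :
    ∫ y : Fin d → ℝ, (u y - u x) * gaussKernel A δ x y = (A x * M).trace :=
  gaussian_nonlocal_exact_on_quadratics_general A hA δ hδ c b M u hu x
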